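/- (Theorem 3, gradient of the off-diagonal interaction term) Let n ≥ 2, D ≥ 1, and fix d ∈ {1,…,D}. Let x ∈ ℝⁿ be non-constant with standardized output y_d := y(x) and o_d = y_d/‖y_d‖. Let y_j ∈ ℝⁿ for j ≠ d be fixed vectors satisfying 1ₙᵀ y_j = 0, let h ∈ ℝ^D with h_d = 0, and let ỹ ∈ ℝ^D. Then the function x ↦ Σ_{j=1}^D h_j (y_j − ỹ_j 1ₙ)ᵀ y(x) is differentiable at x, and its gradient equals (1/σ(x)) · Σ_{j=1}^D h_j (y_j − ⟨o_d, y_j⟩ o_d). In particular, only the components of the y_j that are not linearly correlated with y_d contribute to the back-propagated gradient. -/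

import Mathlib

open scoped BigOperators

/-- Mini-batch mean of a feature dimension across `n` samples. -/
noncomputable def bmean {n : ℕ} (x : Fin n → ℝ) : ℝ := (∑ i, x i) / n

/-- Mini-batch standard deviation of a feature dimension across `n` samples. -/
noncomputable def bstd {n : ℕ} (x : Fin n → ℝ) : ℝ :=
  Real.sqrt ((∑ i, (x i - bmean x) ^ 2) / n)

/-- `x` is non-constant: it differs from the constant vector of its mean. -/
def NonConstant {n : ℕ} (x : Fin n → ℝ) : Prop := x ≠ fun _ => bmean x

/-- The batch-normalization standardization phase (with ε = 0). -/
noncomputable def standardize {n : ℕ} (x : Fin n → ℝ) : Fin n → ℝ :=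
  fun i => (x i - bmean x) / bstd x

/-!
At a non-constant `x` with `σ = bstd x` and `y = standardize x`, the derivative of `bstd` is
`w ↦ ⟨y, w⟩ / n`, so the quotient rule gives the gradient of `v ↦ ⟨c, standardize v⟩` as
`(c - bmean c - (⟨c, y⟩ / n) y) / σ`, i.e. the Jacobian `(I - 𝟙𝟙ᵀ/n - y yᵀ/n) / σ`.
Every standardized vector is centred, so the `ỹⱼ` terms of the interaction drop out and
`c = Σⱼ hⱼ yⱼ`, which is centred because `h_d = 0` and the other `yⱼ` are. Finally `‖y‖² = n`,
so `o = y / √n` and `(⟨c, y⟩ / n) y = Σⱼ hⱼ ⟨o, yⱼ⟩ o`.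
-/

section Standardize

variable {n : ℕ}

noncomputable def dotProductCLM (g : Fin n → ℝ) : (Fin n → ℝ) →L[ℝ] ℝ :=
  ∑ i, g i • ContinuousLinearMap.proj i

theorem dotProductCLM_apply (g w : Fin n → ℝ) : dotProductCLM g w = ∑ i, g i * w i := by
  simp [dotProductCLM]

theorem bmean_eq_dotProductCLM (x : Fin n → ℝ) :
    bmean x = dotProductCLM (fun _ => (n : ℝ)⁻¹) x := by
  simp [dotProductCLM_apply, bmean, Finset.mul_sum, div_eq_inv_mul]

theorem sum_sub_bmean (x : Fin n → ℝ) : ∑ i, (x i - bmean x) = 0 := by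
  rcases Nat.eq_zero_or_pos n with rfl | hn
  · simp
  · simp [Finset.sum_sub_distrib, bmean, mul_div_cancel₀, hn.ne']

theorem sum_standardize (x : Fin n → ℝ) : ∑ i, standardize x i = 0 := by
  simp only [standardize, ← Finset.sum_div, sum_sub_bmean, zero_div]

theorem sum_mul_sub_bmean (c x : Fin n → ℝ) :
    ∑ i, c i * (x i - bmean x) = ∑ i, (c i - bmean c) * x i := by
  simp only [mul_sub, sub_mul, Finset.sum_sub_distrib, ← Finset.mul_sum, ← Finset.sum_mul,
    bmean]
  ring

theorem hasFDerivAt_sub_bmean (i : Fin n) (x : Fin n → ℝ) :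
    HasFDerivAt (fun v => v i - bmean v)
      (ContinuousLinearMap.proj i - dotProductCLM fun _ => (n : ℝ)⁻¹) x := by
  simp_rw [bmean_eq_dotProductCLM]
  exact (ContinuousLinearMap.proj i).hasFDerivAt.sub (dotProductCLM _).hasFDerivAt

theorem hasFDerivAt_sum_mul_sub_bmean (c x : Fin n → ℝ) :
    HasFDerivAt (fun v => ∑ i, c i * (v i - bmean v))
      (dotProductCLM fun i => c i - bmean c) x := by
  simp_rw [sum_mul_sub_bmean c, ← dotProductCLM_apply]
  exact (dotProductCLM _).hasFDerivAt

theorem sum_mul_sub_bmean_of_sum_eq_zero {c : Fin n → ℝ} (hc : ∑ i, c i = 0) (x : Fin n → ℝ) :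
    ∑ i, c i * (x i - bmean x) = ∑ i, c i * x i := by
  simp [mul_sub, Finset.sum_sub_distrib, ← Finset.sum_mul, hc]

theorem hasFDerivAt_sum_sq_sub_bmean (x : Fin n → ℝ) :
    HasFDerivAt (fun v => ∑ i, (v i - bmean v) ^ 2)
      (dotProductCLM fun i => 2 * (x i - bmean x)) x := by
  refine (HasFDerivAt.fun_sum fun i _ => (hasFDerivAt_sub_bmean i x).pow 2).congr_fderiv ?_
  ext w
  have hsum : ∑ i, 2 * (x i - bmean x) = 0 := by rw [← Finset.mul_sum, sum_sub_bmean, mul_zero]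
  simp only [sum_apply, smul_apply, sub_apply, ContinuousLinearMap.proj_apply,
    ← bmean_eq_dotProductCLM, smul_eq_mul, nsmul_eq_mul, Nat.cast_ofNat, Nat.add_one_sub_one,
    pow_one]
  rw [sum_mul_sub_bmean_of_sum_eq_zero hsum, dotProductCLM_apply]

theorem NonConstant.exists_ne_bmean {x : Fin n → ℝ} (hx : NonConstant x) :
    ∃ i, x i ≠ bmean x := by
  by_contra! h
  exact hx (funext h)

theorem NonConstant.sum_sq_sub_bmean_pos {x : Fin n → ℝ} (hx : NonConstant x) :
    0 < ∑ i, (x i - bmean x) ^ 2 := by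
  obtain ⟨i, hi⟩ := hx.exists_ne_bmean
  exact Finset.sum_pos' (fun j _ => sq_nonneg _) ⟨i, Finset.mem_univ i, by
    simpa [sq_pos_iff, sub_ne_zero] using hi⟩

theorem NonConstant.pos {x : Fin n → ℝ} (hx : NonConstant x) : 0 < n := by
  obtain ⟨i, -⟩ := hx.exists_ne_bmean
  exact i.pos

theorem bstd_sq (x : Fin n → ℝ) : bstd x ^ 2 = (∑ i, (x i - bmean x) ^ 2) / n :=
  Real.sq_sqrt (by positivity)

theorem NonConstant.bstd_pos {x : Fin n → ℝ} (hx : NonConstant x) : 0 < bstd x :=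
  Real.sqrt_pos.mpr (div_pos hx.sum_sq_sub_bmean_pos (Nat.cast_pos.mpr hx.pos))

theorem NonConstant.sum_standardize_sq {x : Fin n → ℝ} (hx : NonConstant x) :
    ∑ i, standardize x i ^ 2 = n := by
  have hS := hx.sum_sq_sub_bmean_pos.ne'
  have hn : (n : ℝ) ≠ 0 := Nat.cast_ne_zero.mpr hx.pos.ne'
  simp only [standardize, div_pow, ← Finset.sum_div]
  rw [bstd_sq]
  field_simp

theorem NonConstant.hasFDerivAt_bstd {x : Fin n → ℝ} (hx : NonConstant x) :
    HasFDerivAt bstd (dotProductCLM fun i => standardize x i / n) x := by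
  have hvar := ((hasFDerivAt_sum_sq_sub_bmean x).mul_const (n : ℝ)⁻¹).sqrt
    (by rw [← div_eq_mul_inv, ← bstd_sq]; exact pow_ne_zero 2 hx.bstd_pos.ne')
  change HasFDerivAt bstd ((1 / (2 * bstd x)) • (n : ℝ)⁻¹ • dotProductCLM _) x at hvar
  refine hvar.congr_fderiv ?_
  ext w
  simp only [smul_apply, smul_eq_mul, dotProductCLM_apply, standardize, Finset.mul_sum]
  refine Finset.sum_congr rfl fun i _ => ?_
  field_simp

theorem NonConstant.hasFDerivAt_sum_mul_standardize {x : Fin n → ℝ} (hx : NonConstant x)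
    (c : Fin n → ℝ) :
    HasFDerivAt (fun v => ∑ i, c i * standardize v i)
      (dotProductCLM fun i =>
        (c i - bmean c - (∑ k, c k * standardize x k) / n * standardize x i) / bstd x) x := by
  have hσ := hx.bstd_pos.ne'
  have hquot := (hasFDerivAt_sum_mul_sub_bmean c x).mul
    ((hasDerivAt_inv hσ).comp_hasFDerivAt x hx.hasFDerivAt_bstd)
  have hfun : (fun v => ∑ i, c i * standardize v i)
      = fun v => (∑ i, c i * (v i - bmean v)) * (bstd v)⁻¹ := by
    funext v
    simp only [standardize, div_eq_mul_inv, Finset.sum_mul, mul_assoc]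
  have hcx : ∑ i, c i * (x i - bmean x) = bstd x * ∑ i, c i * standardize x i := by
    simp only [standardize, Finset.mul_sum]
    exact Finset.sum_congr rfl fun i _ => by field_simp
  rw [hfun]
  refine hquot.congr_fderiv ?_
  ext w
  simp only [add_apply, smul_apply, smul_eq_mul, dotProductCLM_apply, hcx, Function.comp_apply]
  generalize ∑ i, c i * standardize x i = A
  simp only [Finset.mul_sum, ← Finset.sum_add_distrib]
  refine Finset.sum_congr rfl fun i _ => ?_
  field_simp
  ring

theorem sum_mul_sum_sub_mul_standardize {ι : Type*} [Fintype ι] (h t : ι → ℝ)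
    (ys : ι → Fin n → ℝ) (v : Fin n → ℝ) :
    ∑ j, h j * ∑ i, (ys j i - t j) * standardize v i
      = ∑ i, (∑ j, h j * ys j i) * standardize v i := by
  have hconst : ∀ j, ∑ i, t j * standardize v i = 0 := fun j => by
    rw [← Finset.mul_sum, sum_standardize, mul_zero]
  simp only [sub_mul, Finset.sum_sub_distrib, hconst, sub_zero, Finset.mul_sum, Finset.sum_mul,
    mul_assoc]
  exact Finset.sum_comm

theorem sum_smul_mul_mul_smul_inv_sqrt (y z : Fin n → ℝ) (i : Fin n) :
    (∑ k, ((√(∑ l, y l ^ 2))⁻¹ • y) k * z k) * ((√(∑ l, y l ^ 2))⁻¹ • y) i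
      = (∑ k, y k * z k) / (∑ k, y k ^ 2) * y i := by
  have hinv : (√(∑ l, y l ^ 2))⁻¹ * (√(∑ l, y l ^ 2))⁻¹ = (∑ l, y l ^ 2)⁻¹ := by
    rw [← mul_inv, Real.mul_self_sqrt (by positivity)]
  simp only [Pi.smul_apply, smul_eq_mul, mul_assoc, ← Finset.mul_sum]
  linear_combination (∑ k, y k * z k) * y i * hinv

theorem sum_mul_sub_div_mul {ι : Type*} [Fintype ι] (h : ι → ℝ) (ys : ι → Fin n → ℝ)
    (y : Fin n → ℝ) (m : ℝ) (i : Fin n) :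
    ∑ j, h j * (ys j i - (∑ k, y k * ys j k) / m * y i)
      = ∑ j, h j * ys j i - (∑ k, (∑ j, h j * ys j k) * y k) / m * y i := by
  simp only [mul_sub, Finset.sum_sub_distrib, Finset.sum_mul, Finset.sum_div, Finset.mul_sum]
  rw [Finset.sum_comm (γ := ι)]
  congr 1
  exact Finset.sum_congr rfl fun j _ => Finset.sum_congr rfl fun k _ => by ring

end Standardize

theorem loss_off_non_gradient_general (n D : ℕ) (d : Fin D)
    (x : Fin n → ℝ) (hx : NonConstant x)
    (ys : Fin D → Fin n → ℝ) (hys : ∀ j, j ≠ d → ∑ i, ys j i = 0)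
    (h : Fin D → ℝ) (hhd : h d = 0) (ytil : Fin D → ℝ) :
    let yd : Fin n → ℝ := standardize x
    let nrm : ℝ := Real.sqrt (∑ i, yd i ^ 2)
    let o : Fin n → ℝ := nrm⁻¹ • yd
    ∃ L : (Fin n → ℝ) →L[ℝ] ℝ,
      HasFDerivAt
        (fun v : Fin n → ℝ =>
          ∑ j, h j * ∑ i, (ys j i - ytil j) * standardize v i) L x ∧
      ∀ w : Fin n → ℝ,
        L w = ∑ i,
          ((1 / bstd x) * ∑ j, h j * (ys j i - (∑ k, o k * ys j k) * o i)) * w i := by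
  intro yd nrm o
  set s : Fin n → ℝ := fun i => ∑ j, h j * ys j i
  have hs : ∑ i, s i = 0 := by
    rw [Finset.sum_comm]
    refine Finset.sum_eq_zero fun j _ => ?_
    rw [← Finset.mul_sum]
    rcases eq_or_ne j d with rfl | hj
    · rw [hhd, zero_mul]
    · rw [hys j hj, mul_zero]
  have hbs : bmean s = 0 := by simp [bmean, hs]
  refine ⟨_, (funext (sum_mul_sum_sub_mul_standardize h ytil ys)).symm ▸
    hx.hasFDerivAt_sum_mul_standardize s, fun w => ?_⟩
  rw [dotProductCLM_apply]
  refine Finset.sum_congr rfl fun i _ => congrArg (· * w i) ?_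
  simp only [o, nrm, yd, sum_smul_mul_mul_smul_inv_sqrt]
  rw [sum_mul_sub_div_mul, hx.sum_standardize_sq, hbs, sub_zero, one_div, div_eq_inv_mul]

/-- Theorem 3, gradient of the off-diagonal interaction term: with
`y_d = y(x)`, `o_d = y_d/‖y_d‖`, fixed zero-mean vectors `yⱼ` (j ≠ d) and coefficients
`h` with `h_d = 0`, the map `x ↦ Σⱼ hⱼ (yⱼ − ỹⱼ1ₙ)ᵀ y(x)` is differentiable at `x`
with gradient `(1/σ(x)) Σⱼ hⱼ (yⱼ − ⟨o_d, yⱼ⟩ o_d)`. -/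
theorem loss_off_non_gradient (n D : ℕ) (hn : 2 ≤ n) (hD : 1 ≤ D) (d : Fin D)
    (x : Fin n → ℝ) (hx : NonConstant x)
    (ys : Fin D → Fin n → ℝ) (hys : ∀ j, j ≠ d → ∑ i, ys j i = 0)
    (h : Fin D → ℝ) (hhd : h d = 0) (ytil : Fin D → ℝ) :
    let yd : Fin n → ℝ := standardize x
    let nrm : ℝ := Real.sqrt (∑ i, yd i ^ 2)
    let o : Fin n → ℝ := nrm⁻¹ • yd
    ∃ L : (Fin n → ℝ) →L[ℝ] ℝ,
      HasFDerivAt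
        (fun v : Fin n → ℝ =>
          ∑ j, h j * ∑ i, (ys j i - ytil j) * standardize v i) L x ∧
      ∀ w : Fin n → ℝ,
        L w = ∑ i,
          ((1 / bstd x) * ∑ j, h j * (ys j i - (∑ k, o k * ys j k) * o i)) * w i :=
  loss_off_non_gradient_general n D d x hx ys hys h hhd ytil
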